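/- For every complex number z, the series D(z) = z·∑_{n=0}^∞ P_n(0;p,q)·P_n(z;p,q) converges absolutely and D(z) = z·√q·((pq;q)_∞/(q;q)_∞)·∑_{n=0}^∞ (−1)^n·(q^{n(n+1)}/((pq;q)_n·(q;q)_n))·(z√q)^n. -/

import Mathlib

/-- Finite q-shifted factorial `(z;q)_n`. -/
noncomputable def qp (z q : ℝ) (n : ℕ) : ℝ := ∏ k ∈ Finset.range n, (1 - z * q ^ k)

/-- Infinite q-shifted factorial `(z;q)_∞`. -/
noncomputable def qpInf (z q : ℝ) : ℝ := ∏' k : ℕ, (1 - z * q ^ k)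

/-- Gaussian q-binomial coefficient. -/
noncomputable def qbinom (q : ℝ) (n k : ℕ) : ℝ := qp q q n / (qp q q k * qp q q (n - k))

/-- Orthonormal generalized Stieltjes–Wigert polynomial `P_n(x;p,q)`. -/
noncomputable def P (p q : ℝ) (n : ℕ) (x : ℂ) : ℂ :=
  (-1) ^ n * ((q ^ ((n : ℝ) / 2 + 1 / 4) : ℝ) : ℂ) *
    ((Real.sqrt (qp p q n / qp q q n) : ℝ) : ℂ) *
    ∑ k ∈ Finset.range (n + 1),
      (-1) ^ k * ((qbinom q n k : ℝ) : ℂ) * ((q ^ ((k : ℝ) ^ 2 + (k : ℝ) / 2) : ℝ) : ℂ) /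
        ((qp p q k : ℝ) : ℂ) * x ^ k

/-!
Writing `n = k + m`, the product `P_n(0) P_n(z)` expands into a double series in `(k, m)` whose
terms are bounded by `C (q^k |z|)^k q^m`; hence everything converges absolutely and the series may
be summed over `m` first. Since `(p;q)_{k+m} = (p;q)_k (pq^k;q)_m`, the inner sum is the
q-binomial series `S(t) = ∑ₘ (a;q)_m / (q;q)_m tᵐ = (at;q)_∞ / (t;q)_∞` at `a = pq^k`, `t = q`,
which equals `(pq;q)_∞ / ((pq;q)_k (q;q)_∞)`. The q-binomial theorem itself comes from the
functional equation `(1 - t) S(t) = (1 - at) S(qt)`, iterated `n` times, and `S(qⁿ t) → 1`.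
-/

open Filter Finset Topology

section QPochhammer

variable {a q : ℝ}

@[simp] lemma qp_zero (a q : ℝ) : qp a q 0 = 1 := prod_range_zero _

lemma qp_succ (a q : ℝ) (n : ℕ) : qp a q (n + 1) = qp a q n * (1 - a * q ^ n) :=
  prod_range_succ _ n

lemma qp_add (a q : ℝ) (m n : ℕ) : qp a q (m + n) = qp a q m * qp (a * q ^ m) q n := by
  simp only [qp, prod_range_add, pow_add, mul_assoc]

lemma mul_pow_lt_one (ha : a < 1) (hq0 : 0 ≤ q) (hq1 : q ≤ 1) (k : ℕ) : a * q ^ k < 1 := by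
  have := pow_le_one₀ hq0 hq1 (n := k)
  have := pow_nonneg hq0 k
  rcases le_total 0 a with h | h <;> nlinarith

lemma qp_pos (ha : a < 1) (hq0 : 0 ≤ q) (hq1 : q ≤ 1) (n : ℕ) : 0 < qp a q n :=
  prod_pos fun k _ => sub_pos.2 (mul_pow_lt_one ha hq0 hq1 k)

lemma mul_pow_mem_Icc (ha0 : 0 ≤ a) (ha1 : a ≤ 1) (hq0 : 0 ≤ q) (hq1 : q ≤ 1) (k : ℕ) :
    a * q ^ k ∈ Set.Icc 0 1 :=
  ⟨mul_nonneg ha0 (pow_nonneg hq0 k), mul_le_one₀ ha1 (pow_nonneg hq0 k) (pow_le_one₀ hq0 hq1)⟩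

lemma qp_mem_Icc (ha0 : 0 ≤ a) (ha1 : a ≤ 1) (hq0 : 0 ≤ q) (hq1 : q ≤ 1) (n : ℕ) :
    qp a q n ∈ Set.Icc 0 1 := by
  have h := mul_pow_mem_Icc ha0 ha1 hq0 hq1
  exact ⟨prod_nonneg fun k _ => sub_nonneg.2 (h k).2,
    prod_le_one (fun k _ => sub_nonneg.2 (h k).2) fun k _ => sub_le_self _ (h k).1⟩

lemma qp_antitone (ha0 : 0 ≤ a) (ha1 : a ≤ 1) (hq0 : 0 ≤ q) (hq1 : q ≤ 1) :
    Antitone (qp a q) := by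
  refine antitone_nat_of_succ_le fun n => ?_
  rw [qp_succ]
  exact mul_le_of_le_one_right (qp_mem_Icc ha0 ha1 hq0 hq1 n).1
    (sub_le_self _ (mul_pow_mem_Icc ha0 ha1 hq0 hq1 n).1)

lemma hasProd_qp (hq0 : 0 ≤ q) (hq1 : q < 1) (a : ℝ) :
    HasProd (fun k => 1 - a * q ^ k) (qpInf a q) := by
  have : Summable fun k => -(a * q ^ k) :=
    ((summable_geometric_of_lt_one hq0 hq1).mul_left a).neg
  simpa only [qpInf, sub_eq_add_neg] using (Real.multipliable_one_add_of_summable this).hasProd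

lemma tendsto_qp (hq0 : 0 ≤ q) (hq1 : q < 1) (a : ℝ) :
    Tendsto (qp a q) atTop (𝓝 (qpInf a q)) :=
  (hasProd_qp hq0 hq1 a).tendsto_prod_nat

lemma qpInf_pos (ha : a < 1) (hq0 : 0 ≤ q) (hq1 : q < 1) : 0 < qpInf a q := by
  have hsum : Summable fun k => -(a * q ^ k) :=
    ((summable_geometric_of_lt_one hq0 hq1).mul_left a).neg
  have hpos : ∀ k, 0 < 1 + -(a * q ^ k) := fun k => by
    linarith [mul_pow_lt_one ha hq0 hq1.le k]
  simp only [qpInf, sub_eq_add_neg]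
  rw [← Real.rexp_tsum_eq_tprod hpos (Real.summable_log_one_add_of_summable hsum)]
  exact Real.exp_pos _

lemma qpInf_le_qp (ha0 : 0 ≤ a) (ha1 : a ≤ 1) (hq0 : 0 ≤ q) (hq1 : q < 1) (n : ℕ) :
    qpInf a q ≤ qp a q n :=
  (qp_antitone ha0 ha1 hq0 hq1.le).le_of_tendsto (tendsto_qp hq0 hq1 a) n

lemma qpInf_eq_qp_mul_qpInf (hq0 : 0 ≤ q) (hq1 : q < 1) (a : ℝ) (n : ℕ) :
    qpInf a q = qp a q n * qpInf (a * q ^ n) q := by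
  refine tendsto_nhds_unique ((tendsto_qp hq0 hq1 a).comp (tendsto_add_atTop_nat n)) ?_
  convert (tendsto_qp hq0 hq1 (a * q ^ n)).const_mul (qp a q n) using 1
  ext m
  rw [Function.comp_apply, add_comm, qp_add]

end QPochhammer

section QBinomialTheorem

variable {a q t : ℝ}

noncomputable def qBinomialSeries (a q t : ℝ) : ℝ := ∑' m : ℕ, qp a q m / qp q q m * t ^ m

lemma qp_div_qp_le (ha0 : 0 ≤ a) (ha1 : a ≤ 1) (hq0 : 0 ≤ q) (hq1 : q < 1) (m : ℕ) :
    qp a q m / qp q q m ≤ (qpInf q q)⁻¹ := by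
  rw [← one_div]
  exact div_le_div₀ zero_le_one (qp_mem_Icc ha0 ha1 hq0 hq1.le m).2 (qpInf_pos hq1 hq0 hq1)
    (qpInf_le_qp hq0 hq1.le hq0 hq1 m)

lemma qp_div_qp_nonneg (ha0 : 0 ≤ a) (ha1 : a ≤ 1) (hq0 : 0 ≤ q) (hq1 : q < 1) (m : ℕ) :
    0 ≤ qp a q m / qp q q m :=
  div_nonneg (qp_mem_Icc ha0 ha1 hq0 hq1.le m).1 (qp_pos hq1 hq0 hq1.le m).le

lemma summable_qBinomial (ha0 : 0 ≤ a) (ha1 : a ≤ 1) (hq0 : 0 ≤ q) (hq1 : q < 1)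
    (ht0 : 0 ≤ t) (ht1 : t < 1) :
    Summable fun m => qp a q m / qp q q m * t ^ m :=
  .of_nonneg_of_le (fun m => mul_nonneg (qp_div_qp_nonneg ha0 ha1 hq0 hq1 m) (pow_nonneg ht0 m))
    (fun m => mul_le_mul_of_nonneg_right (qp_div_qp_le ha0 ha1 hq0 hq1 m) (pow_nonneg ht0 m))
    ((summable_geometric_of_lt_one ht0 ht1).mul_left _)

lemma one_sub_mul_qBinomialSeries (ha0 : 0 ≤ a) (ha1 : a ≤ 1) (hq0 : 0 ≤ q) (hq1 : q < 1)
    (ht0 : 0 ≤ t) (ht1 : t < 1) :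
    (1 - t) * qBinomialSeries a q t = (1 - a * t) * qBinomialSeries a q (q * t) := by
  set c : ℕ → ℝ := fun m => qp a q m / qp q q m
  have hrec (m : ℕ) : c (m + 1) * (1 - q ^ (m + 1)) = c m * (1 - a * q ^ m) := by
    have := (qp_pos hq1 hq0 hq1.le m).ne'
    have := (sub_pos.2 (pow_lt_one₀ hq0 hq1 m.succ_ne_zero)).ne'
    simp only [c, qp_succ, ← pow_succ']
    field_simp
  have hA := (summable_qBinomial ha0 ha1 hq0 hq1 ht0 ht1).hasSum
  have hB := (summable_qBinomial ha0 ha1 hq0 hq1 (mul_nonneg hq0 ht0)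
    (by nlinarith)).hasSum
  have hdiff : HasSum (fun m => c m * (1 - q ^ m) * t ^ m)
      (qBinomialSeries a q t - qBinomialSeries a q (q * t)) :=
    (hA.sub hB).congr_fun fun m => by rw [mul_pow]; ring
  have hshift : HasSum (fun m => c (m + 1) * (1 - q ^ (m + 1)) * t ^ (m + 1))
      (qBinomialSeries a q t - qBinomialSeries a q (q * t)) := by
    simpa using (hasSum_nat_add_iff' 1).2 hdiff
  have hrhs : HasSum (fun m => c (m + 1) * (1 - q ^ (m + 1)) * t ^ (m + 1))
      (t * qBinomialSeries a q t - a * t * qBinomialSeries a q (q * t)) :=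
    ((hA.mul_left t).sub (hB.mul_left (a * t))).congr_fun fun m => by rw [hrec, mul_pow]; ring
  linear_combination hshift.unique hrhs

lemma tendsto_qBinomialSeries_pow_mul (ha0 : 0 ≤ a) (ha1 : a ≤ 1) (hq0 : 0 ≤ q) (hq1 : q < 1)
    (ht0 : 0 ≤ t) (ht1 : t < 1) :
    Tendsto (fun n : ℕ => qBinomialSeries a q (q ^ n * t)) atTop (𝓝 1) := by
  have hlim : Tendsto (fun n : ℕ => q ^ n * t) atTop (𝓝 0) := by
    simpa using (tendsto_pow_atTop_nhds_zero_of_lt_one hq0 hq1).mul_const t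
  have := tendsto_tsum_of_dominated_convergence (summable_qBinomial ha0 ha1 hq0 hq1 ht0 ht1)
    (fun m => (hlim.pow m).const_mul (qp a q m / qp q q m)) (.of_forall fun n m => ?_)
  · rwa [tsum_eq_single 0 fun m hm => by simp [hm], pow_zero, qp_zero, qp_zero, div_one,
      mul_one] at this
  have hqn : q ^ n * t ≤ t := mul_le_of_le_one_left ht0 (pow_le_one₀ hq0 hq1.le)
  have hc := qp_div_qp_nonneg ha0 ha1 hq0 hq1 m
  have hqnt : 0 ≤ q ^ n * t := mul_nonneg (pow_nonneg hq0 n) ht0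
  rw [Real.norm_of_nonneg (mul_nonneg hc (pow_nonneg hqnt m))]
  exact mul_le_mul_of_nonneg_left (pow_le_pow_left₀ hqnt hqn m) hc

lemma qp_mul_qBinomialSeries (ha0 : 0 ≤ a) (ha1 : a ≤ 1) (hq0 : 0 ≤ q) (hq1 : q < 1)
    (ht0 : 0 ≤ t) (ht1 : t < 1) (n : ℕ) :
    qp t q n * qBinomialSeries a q t = qp (a * t) q n * qBinomialSeries a q (q ^ n * t) := by
  induction n with
  | zero => simp
  | succ n ih =>
    have h := one_sub_mul_qBinomialSeries ha0 ha1 hq0 hq1 (mul_nonneg (pow_nonneg hq0 n) ht0)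
      (lt_of_le_of_lt (mul_le_of_le_one_left ht0 (pow_le_one₀ hq0 hq1.le)) ht1)
    rw [show q * (q ^ n * t) = q ^ (n + 1) * t by ring] at h
    rw [qp_succ, qp_succ]
    linear_combination (1 - t * q ^ n) * ih + qp (a * t) q n * h

theorem qBinomialSeries_eq (ha0 : 0 ≤ a) (ha1 : a ≤ 1) (hq0 : 0 ≤ q) (hq1 : q < 1)
    (ht0 : 0 ≤ t) (ht1 : t < 1) :
    qBinomialSeries a q t = qpInf (a * t) q / qpInf t q := by
  have hlim := ((tendsto_qp hq0 hq1 (a * t)).mul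
    (tendsto_qBinomialSeries_pow_mul ha0 ha1 hq0 hq1 ht0 ht1)).congr
    fun n => (qp_mul_qBinomialSeries ha0 ha1 hq0 hq1 ht0 ht1 n).symm
  rw [eq_div_iff (qpInf_pos ht1 hq0 hq1).ne', mul_comm, ← mul_one (qpInf (a * t) q)]
  exact tendsto_nhds_unique ((tendsto_qp hq0 hq1 t).mul_const _) hlim

end QBinomialTheorem

section Antidiagonal

variable {E : Type*} [NormedAddCommGroup E] [CompleteSpace E] {f : ℕ × ℕ → E}

lemma summable_sum_antidiagonal (hf : Summable f) :
    Summable fun n => ∑ kl ∈ antidiagonal n, f kl := by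
  have := ((HasAntidiagonal.sigmaAntidiagonalEquivProd.summable_iff (f := f)).2 hf).sigma
  simpa only [Function.comp_apply, HasAntidiagonal.sigmaAntidiagonalEquivProd_apply,
    Finset.tsum_subtype] using this

lemma tsum_sum_antidiagonal_eq_tsum_tsum (hf : Summable f) :
    ∑' n, ∑ kl ∈ antidiagonal n, f kl = ∑' k, ∑' m, f (k, m) := by
  have hσ := (HasAntidiagonal.sigmaAntidiagonalEquivProd.summable_iff (f := f)).2 hf
  rw [← hf.tsum_prod, ← HasAntidiagonal.sigmaAntidiagonalEquivProd.tsum_eq f,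
    show (fun c => f (HasAntidiagonal.sigmaAntidiagonalEquivProd c)) =
      f ∘ HasAntidiagonal.sigmaAntidiagonalEquivProd from rfl, hσ.tsum_sigma]
  simp only [Function.comp_apply, HasAntidiagonal.sigmaAntidiagonalEquivProd_apply,
    Finset.tsum_subtype]

end Antidiagonal

lemma summable_pow_mul_pow_self {q : ℝ} (hq0 : 0 ≤ q) (hq1 : q < 1) (r : ℝ) :
    Summable fun k : ℕ => (q ^ k * r) ^ k := by
  have hlim : Tendsto (fun k : ℕ => q ^ k * ‖r‖) atTop (𝓝 0) := by
    simpa using (tendsto_pow_atTop_nhds_zero_of_lt_one hq0 hq1).mul_const ‖r‖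
  refine summable_geometric_two.of_norm_bounded_eventually_nat ?_
  filter_upwards [hlim.eventually_le_const one_half_pos] with k hk
  rw [norm_pow, norm_mul, norm_pow, Real.norm_of_nonneg hq0]
  exact pow_le_pow_left₀ (by positivity) hk k

lemma rpow_natCast_add_half {q : ℝ} (hq : 0 < q) (j k : ℕ) :
    q ^ ((j : ℝ) + k / 2) = q ^ j * √q ^ k := by
  rw [Real.rpow_add hq, Real.rpow_natCast, Real.sqrt_eq_rpow, ← Real.rpow_natCast (_ ^ _),
    ← Real.rpow_mul hq.le, one_div_mul_eq_div]

section StieltjesWigert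

variable {p q : ℝ}

/-- The summand of `P p q (k + m) 0 * P p q (k + m) z` of degree `k` in `z`. -/
noncomputable def swTerm (p q : ℝ) (z : ℂ) (k m : ℕ) : ℂ :=
  ((√q * q ^ (k ^ 2 + k) * √q ^ k / qp q q k : ℝ) : ℂ) * (-z) ^ k *
    ((qp (p * q ^ k) q m / qp q q m * q ^ m : ℝ) : ℂ)

lemma P_zero (hq0 : 0 ≤ q) (hq1 : q < 1) (n : ℕ) :
    P p q n 0 = (-1) ^ n * ((q ^ ((n : ℝ) / 2 + 1 / 4) : ℝ) : ℂ) *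
      ((√(qp p q n / qp q q n) : ℝ) : ℂ) := by
  have hbinom : qbinom q n 0 = 1 := by
    rw [qbinom, qp_zero, one_mul, Nat.sub_zero, div_self (qp_pos hq1 hq0 hq1.le n).ne']
  rw [P, sum_eq_single 0 (fun k _ hk => by rw [zero_pow hk, mul_zero]) (by simp)]
  simp [hbinom]

lemma P_zero_sq (hp1 : p < 1) (hq0 : 0 < q) (hq1 : q < 1) (n : ℕ) :
    P p q n 0 ^ 2 = ((q ^ n * √q * (qp p q n / qp q q n) : ℝ) : ℂ) := by
  have hr : 0 ≤ qp p q n / qp q q n :=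
    div_nonneg (qp_pos hp1 hq0.le hq1.le n).le (qp_pos hq1 hq0.le hq1.le n).le
  have hpow : (q ^ ((n : ℝ) / 2 + 1 / 4)) ^ 2 = q ^ n * √q := by
    rw [← Real.rpow_natCast, ← Real.rpow_mul hq0.le, ← pow_one √q,
      ← rpow_natCast_add_half hq0]
    push_cast
    ring_nf
  rw [P_zero hq0.le hq1, mul_pow, mul_pow, ← pow_mul, mul_comm n, pow_mul, neg_one_sq, one_pow,
    one_mul, ← Complex.ofReal_pow, ← Complex.ofReal_pow, Real.sq_sqrt hr, hpow]
  push_cast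
  ring

lemma P_zero_mul_P (hp1 : p < 1) (hq0 : 0 < q) (hq1 : q < 1) (n : ℕ) (z : ℂ) :
    P p q n 0 * P p q n z = ∑ kl ∈ antidiagonal n, swTerm p q z kl.1 kl.2 := by
  have hPz : P p q n z = P p q n 0 * ∑ k ∈ range (n + 1), (-1) ^ k * ((qbinom q n k : ℝ) : ℂ) *
      ((q ^ ((k : ℝ) ^ 2 + (k : ℝ) / 2) : ℝ) : ℂ) / ((qp p q k : ℝ) : ℂ) * z ^ k := by
    rw [P_zero hq0.le hq1, P]
  rw [hPz, ← mul_assoc, ← sq, P_zero_sq hp1 hq0 hq1, mul_sum,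
    Nat.sum_antidiagonal_eq_sum_range_succ_mk]
  refine sum_congr rfl fun k hk => ?_
  obtain ⟨m, rfl⟩ := Nat.exists_eq_add_of_le (Nat.lt_succ_iff.1 (mem_range.1 hk))
  rw [Nat.add_sub_cancel_left]
  have := (qp_pos hq1 hq0.le hq1.le k).ne'
  have := (qp_pos hq1 hq0.le hq1.le m).ne'
  have := (qp_pos hq1 hq0.le hq1.le (k + m)).ne'
  have := (qp_pos hp1 hq0.le hq1.le k).ne'
  have key : q ^ (k + m) * √q * (qp p q (k + m) / qp q q (k + m)) *
      (qbinom q (k + m) k * q ^ ((k : ℝ) ^ 2 + (k : ℝ) / 2) / qp p q k) =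
      √q * q ^ (k ^ 2 + k) * √q ^ k / qp q q k * (qp (p * q ^ k) q m / qp q q m * q ^ m) := by
    rw [qbinom, Nat.add_sub_cancel_left, qp_add p q k m,
      show (k : ℝ) ^ 2 = ((k ^ 2 : ℕ) : ℝ) by push_cast; rfl, rpow_natCast_add_half hq0]
    field_simp
    ring
  calc _ = ((q ^ (k + m) * √q * (qp p q (k + m) / qp q q (k + m)) *
        (qbinom q (k + m) k * q ^ ((k : ℝ) ^ 2 + (k : ℝ) / 2) / qp p q k) : ℝ) : ℂ) *
        ((-1) ^ k * z ^ k) := by push_cast; ring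
    _ = _ := by rw [key, swTerm, neg_pow]; push_cast; ring

lemma norm_swTerm_le (hp0 : 0 ≤ p) (hp1 : p < 1) (hq0 : 0 < q) (hq1 : q < 1) (z : ℂ) (k m : ℕ) :
    ‖swTerm p q z k m‖ ≤ (q ^ k * ‖z‖) ^ k / qpInf q q * (q ^ m / qpInf q q) := by
  have hQ := qpInf_pos hq1 hq0.le hq1
  have hsq : √q ≤ 1 := Real.sqrt_le_one.2 hq1.le
  have hA : √q * q ^ (k ^ 2 + k) * √q ^ k / qp q q k ≤ (q ^ k) ^ k / qpInf q q := by
    refine div_le_div₀ (by positivity) ?_ hQ (qpInf_le_qp hq0.le hq1.le hq0.le hq1 k)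
    calc √q * q ^ (k ^ 2 + k) * √q ^ k ≤ 1 * q ^ (k ^ 2) * 1 :=
          mul_le_mul (mul_le_mul hsq (pow_le_pow_of_le_one hq0.le hq1.le (Nat.le_add_right _ _))
            (by positivity) zero_le_one) (pow_le_one₀ (Real.sqrt_nonneg q) hsq) (by positivity)
            (by positivity)
      _ = (q ^ k) ^ k := by rw [← pow_mul, sq, one_mul, mul_one]
  have hpk := mul_pow_mem_Icc hp0 hp1.le hq0.le hq1.le k
  have hB : qp (p * q ^ k) q m / qp q q m * q ^ m ≤ q ^ m / qpInf q q := by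
    rw [div_eq_inv_mul (q ^ m)]
    exact mul_le_mul_of_nonneg_right (qp_div_qp_le hpk.1 hpk.2 hq0.le hq1 m) (by positivity)
  have hB0 : 0 ≤ qp (p * q ^ k) q m / qp q q m * q ^ m :=
    mul_nonneg (qp_div_qp_nonneg hpk.1 hpk.2 hq0.le hq1 m) (by positivity)
  have hA0 : 0 ≤ √q * q ^ (k ^ 2 + k) * √q ^ k / qp q q k :=
    div_nonneg (by positivity) (qp_pos hq1 hq0.le hq1.le k).le
  calc ‖swTerm p q z k m‖ = √q * q ^ (k ^ 2 + k) * √q ^ k / qp q q k * ‖z‖ ^ k *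
        (qp (p * q ^ k) q m / qp q q m * q ^ m) := by
        rw [swTerm, norm_mul, norm_mul, norm_pow, norm_neg, Complex.norm_real, Complex.norm_real,
          Real.norm_of_nonneg hA0, Real.norm_of_nonneg hB0]
    _ ≤ (q ^ k) ^ k / qpInf q q * ‖z‖ ^ k * (q ^ m / qpInf q q) :=
        mul_le_mul (mul_le_mul_of_nonneg_right hA (by positivity)) hB hB0
          (mul_nonneg (hA0.trans hA) (by positivity))
    _ = (q ^ k * ‖z‖) ^ k / qpInf q q * (q ^ m / qpInf q q) := by rw [mul_pow]; ring

lemma summable_norm_swTerm (hp0 : 0 ≤ p) (hp1 : p < 1) (hq0 : 0 < q) (hq1 : q < 1) (z : ℂ) :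
    Summable fun kl : ℕ × ℕ => ‖swTerm p q z kl.1 kl.2‖ := by
  refine .of_nonneg_of_le (fun _ => norm_nonneg _)
    (fun kl => norm_swTerm_le hp0 hp1 hq0 hq1 z kl.1 kl.2) ?_
  have hQ := (qpInf_pos hq1 hq0.le hq1).le
  exact .mul_of_nonneg (f := fun k : ℕ => (q ^ k * ‖z‖) ^ k / qpInf q q)
    (g := fun m : ℕ => q ^ m / qpInf q q)
    ((summable_pow_mul_pow_self hq0.le hq1 ‖z‖).div_const _)
    ((summable_geometric_of_lt_one hq0.le hq1).div_const _)
    (fun k => div_nonneg (by positivity) hQ) (fun m => div_nonneg (by positivity) hQ)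

lemma tsum_swTerm (hp0 : 0 ≤ p) (hp1 : p < 1) (hq0 : 0 < q) (hq1 : q < 1) (z : ℂ) (k : ℕ) :
    ∑' m, swTerm p q z k m = ((√q : ℝ) : ℂ) * ((qpInf (p * q) q / qpInf q q : ℝ) : ℂ) *
      ((-1) ^ k * ((q : ℂ) ^ (k * (k + 1)) /
        (((qp (p * q) q k : ℝ) : ℂ) * ((qp q q k : ℝ) : ℂ))) * (z * ((√q : ℝ) : ℂ)) ^ k) := by
  have hpk := mul_pow_mem_Icc hp0 hp1.le hq0.le hq1.le k
  have hpq := (qp_pos (mul_lt_one_of_nonneg_of_lt_one_left hp0 hp1 hq1.le) hq0.le hq1.le k).ne'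
  have := (qp_pos hq1 hq0.le hq1.le k).ne'
  have := (qpInf_pos hq1 hq0.le hq1).ne'
  have hrow : ∑' m, qp (p * q ^ k) q m / qp q q m * q ^ m =
      qpInf (p * q) q / (qp (p * q) q k * qpInf q q) := by
    rw [← qBinomialSeries, qBinomialSeries_eq hpk.1 hpk.2 hq0.le hq1 hq0.le hq1,
      qpInf_eq_qp_mul_qpInf hq0.le hq1 (p * q) k, mul_right_comm p, mul_div_mul_left _ _ hpq]
  simp only [swTerm]
  rw [tsum_mul_left, ← Complex.ofReal_tsum, hrow]
  push_cast
  field_simp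
  ring

end StieltjesWigert

theorem stmt_3 (p q : ℝ) (hp0 : 0 ≤ p) (hp1 : p < 1) (hq0 : 0 < q) (hq1 : q < 1) (z : ℂ) :
    Summable (fun n : ℕ => ‖P p q n 0 * P p q n z‖) ∧
    z * (∑' n : ℕ, P p q n 0 * P p q n z)
      = z * ((Real.sqrt q : ℝ) : ℂ) * ((qpInf (p * q) q / qpInf q q : ℝ) : ℂ) *
        ∑' n : ℕ, (-1) ^ n * ((q : ℂ) ^ (n * (n + 1)) /
          (((qp (p * q) q n : ℝ) : ℂ) * ((qp q q n : ℝ) : ℂ))) *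
          (z * ((Real.sqrt q : ℝ) : ℂ)) ^ n := by
  have hnorm := summable_norm_swTerm hp0 hp1 hq0 hq1 z
  have hrow (n : ℕ) := P_zero_mul_P hp1 hq0 hq1 n z
  constructor
  · exact .of_nonneg_of_le (fun _ => norm_nonneg _) (fun n => hrow n ▸ norm_sum_le _ _)
      (summable_sum_antidiagonal hnorm)
  · rw [tsum_congr hrow, tsum_sum_antidiagonal_eq_tsum_tsum hnorm.of_norm,
      tsum_congr (tsum_swTerm hp0 hp1 hq0 hq1 z), tsum_mul_left]
    ring
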